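/- arXiv:math/9904094 — 5 statements merged into one kernel-verified Lean document; each statement's English description precedes it below -/
import Mathlib

section
/- If P is a hereditary cone in a C*-algebra A, N = {a ∈ A : a*a ∈ P}, and M = span(P), then M equals the linear span of the set of products {a*b : a, b ∈ N} (no closure taken). -/
/-! Every `p ∈ P` is positive, hence `p = star c * c` with `c ∈ N`, so `P` lies in the span of
the products. Conversely, `N` is closed under addition: by the
parallelogram law `star (a + b) * (a + b) ≤ 2 • (star a * a + star b * b) ∈ P`, and `P` is
hereditary. It is also closed under unimodular scalars, so the polarization identity
`star a * b = ∑ₖ (iᵏ / 4) • star (b + iᵏ • a) * (b + iᵏ • a)` writes `star a * b` as a linear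
combination of elements of `P`. -/

open Complex Finset

section StarRing

variable {A : Type*} [NonUnitalRing A] [StarRing A]

theorem star_add_mul_self_add_star_sub_mul_self (a b : A) :
    star (a + b) * (a + b) + star (a - b) * (a - b) = 2 • (star a * a + star b * b) := by
  simp only [star_add, star_sub, add_mul, sub_mul, mul_add, mul_sub, two_nsmul]
  abel

variable [Module ℂ A] [StarModule ℂ A] [IsScalarTower ℂ A A] [SMulCommClass ℂ A A]

theorem star_smul_mul_smul_self_of_norm_eq_one {μ : ℂ} (hμ : ‖μ‖ = 1) (a : A) :
    star (μ • a) * (μ • a) = star a * a := by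
  rw [star_smul, smul_mul_smul_comm, ← starRingEnd_apply, conj_mul', hμ]
  simp

theorem star_mul_eq_sum_smul_star_mul_self (a b : A) :
    star a * b = ∑ k ∈ range 4, (I ^ k / 4) • (star (b + I ^ k • a) * (b + I ^ k • a)) := by
  simp only [sum_range_succ, range_zero, sum_empty, zero_add, pow_zero, pow_one, I_sq,
    I_pow_three, star_add, star_smul, add_mul, mul_add, smul_mul_assoc, mul_smul_comm, smul_smul,
    smul_add, Complex.star_def, map_neg, map_one, conj_I]
  match_scalars <;> ring_nf <;> simp only [I_sq] <;> ring

end StarRing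

section HereditaryCone

variable {A : Type*} [NonUnitalRing A] [StarRing A] [PartialOrder A] [StarOrderedRing A]
  {P : Set A}

theorem star_add_mul_self_mem (hPadd : ∀ p ∈ P, ∀ q ∈ P, p + q ∈ P)
    (hPher : ∀ a b : A, 0 ≤ a → a ≤ b → b ∈ P → a ∈ P) {a b : A}
    (ha : star a * a ∈ P) (hb : star b * b ∈ P) : star (a + b) * (a + b) ∈ P := by
  refine hPher _ _ (star_mul_self_nonneg _)
    (le_add_of_nonneg_right (star_mul_self_nonneg (a - b))) ?_
  rw [star_add_mul_self_add_star_sub_mul_self, two_nsmul]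
  exact hPadd _ (hPadd _ ha _ hb) _ (hPadd _ ha _ hb)

variable [Module ℂ A] [StarModule ℂ A] [IsScalarTower ℂ A A] [SMulCommClass ℂ A A]

theorem star_mul_mem_span_of_star_mul_self_mem (hPadd : ∀ p ∈ P, ∀ q ∈ P, p + q ∈ P)
    (hPher : ∀ a b : A, 0 ≤ a → a ≤ b → b ∈ P → a ∈ P) {a b : A}
    (ha : star a * a ∈ P) (hb : star b * b ∈ P) : star a * b ∈ Submodule.span ℂ P := by
  rw [star_mul_eq_sum_smul_star_mul_self]
  refine Submodule.sum_mem _ fun k _ => Submodule.smul_mem _ _ (Submodule.subset_span ?_)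
  have hIk : ‖I ^ k‖ = 1 := by rw [norm_pow, norm_I, one_pow]
  exact star_add_mul_self_mem hPadd hPher hb
    (by rwa [star_smul_mul_smul_self_of_norm_eq_one hIk])

end HereditaryCone

theorem span_hereditary_cone_eq_span_products_general
    {A : Type*} [NonUnitalNormedRing A] [StarRing A] [CStarRing A]
    [PartialOrder A] [StarOrderedRing A] [NormedSpace ℂ A] [StarModule ℂ A]
    [IsScalarTower ℂ A A] [SMulCommClass ℂ A A] [CompleteSpace A]
    (P : Set A)
    (hPpos : ∀ p ∈ P, (0 : A) ≤ p)
    (hPadd : ∀ p ∈ P, ∀ q ∈ P, p + q ∈ P)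
    (hPher : ∀ a b : A, 0 ≤ a → a ≤ b → b ∈ P → a ∈ P) :
    Submodule.span ℂ P =
      Submodule.span ℂ {x : A | ∃ a ∈ {a : A | star a * a ∈ P},
        ∃ b ∈ {a : A | star a * a ∈ P}, x = star a * b} := by
  let _ : NonUnitalCStarAlgebra A := {}
  refine le_antisymm (Submodule.span_le.2 fun p hp => ?_) (Submodule.span_le.2 ?_)
  · obtain ⟨c, rfl⟩ := CStarAlgebra.nonneg_iff_eq_star_mul_self.1 (hPpos p hp)
    exact Submodule.subset_span ⟨c, hp, c, hp, rfl⟩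
  · rintro _ ⟨a, ha, b, hb, rfl⟩
    exact star_mul_mem_span_of_star_mul_self_mem hPadd hPher ha hb

/-- If `P` is a hereditary cone in a C*-algebra `A`, `N = {a : A | star a * a ∈ P}` and
`M = span ℂ P`, then `M` coincides with the linear span of the set of products
`{star a * b : a, b ∈ N}` (no closure taken). -/
theorem span_hereditary_cone_eq_span_products
    {A : Type*} [NonUnitalNormedRing A] [StarRing A] [CStarRing A]
    [PartialOrder A] [StarOrderedRing A] [NormedSpace ℂ A] [StarModule ℂ A]
    [IsScalarTower ℂ A A] [SMulCommClass ℂ A A] [CompleteSpace A]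
    (P : Set A)
    (hPpos : ∀ p ∈ P, (0 : A) ≤ p)
    (hPadd : ∀ p ∈ P, ∀ q ∈ P, p + q ∈ P)
    (hPsmul : ∀ (r : ℝ), 0 ≤ r → ∀ p ∈ P, r • p ∈ P)
    (hPher : ∀ a b : A, 0 ≤ a → a ≤ b → b ∈ P → a ∈ P) :
    Submodule.span ℂ P =
      Submodule.span ℂ {x : A | ∃ a ∈ {a : A | star a * a ∈ P},
        ∃ b ∈ {a : A | star a * a ∈ P}, x = star a * b} :=
  span_hereditary_cone_eq_span_products_general P hPpos hPadd hPher
end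

section
/- Let A be a C*-algebra of operators on a Hilbert space H, G a locally compact group with Haar measure, and f : G → A a continuous compactly supported function. Then (∫ f(t) dt)* (∫ f(t) dt) ≤ |supp(f)| · ∫ f(t)* f(t) dt, where |supp(f)| denotes the Haar measure of the support of f. -/
open MeasureTheory ContinuousLinearMap

open scoped ComplexOrder InnerProductSpace ENNReal

/-!
Testing against a vector `x`, the inequality says
`‖∫ f t x‖² ≤ μ(supp f) · ∫ ‖f t x‖²`, which is the Cauchy–Schwarz inequality
`(∫_S h)² ≤ μ(S) ∫_S h²` for `h = ‖f · x‖` and `S = supp f`. The latter holds because the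
quadratic polynomial `c ↦ ∫_S (h - c)²` is nonnegative, so its discriminant is not positive.
-/

theorem sq_integral_le_measureReal_univ_mul_integral_sq {α : Type*} [MeasurableSpace α]
    {μ : Measure α} [IsFiniteMeasure μ] {h : α → ℝ} (hh : MemLp h 2 μ) :
    (∫ a, h a ∂μ) ^ 2 ≤ μ.real Set.univ * ∫ a, h a ^ 2 ∂μ := by
  have hi : Integrable h μ := hh.integrable one_le_two
  have hi2 : Integrable (fun a => h a ^ 2) μ := hh.integrable_sq
  have hquad : ∀ c : ℝ,
      0 ≤ μ.real Set.univ * (c * c) + (-2 * ∫ a, h a ∂μ) * c + ∫ a, h a ^ 2 ∂μ := fun c =>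
    calc 0 ≤ ∫ a, (h a - c) ^ 2 ∂μ := integral_nonneg fun a => sq_nonneg _
      _ = ∫ a, (h a ^ 2 - 2 * c * h a) + c ^ 2 ∂μ := by congr 1 with a; ring
      _ = _ := by
        rw [integral_add (f := fun a => h a ^ 2 - 2 * c * h a) (hi2.sub (hi.const_mul _))
            (integrable_const _),
          integral_sub hi2 (hi.const_mul _), integral_const_mul, integral_const, smul_eq_mul]
        ring
  have := discrim_le_zero hquad
  rw [discrim] at this
  linarith

theorem sq_norm_integral_le_measureReal_mul_integral_norm_sq {α E : Type*} [MeasurableSpace α]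
    [NormedAddCommGroup E] [NormedSpace ℝ E] {μ : Measure α} {s : Set α} (hs : μ s ≠ ∞)
    {g : α → E} (hg : MemLp g 2 μ) (hgs : ∀ a ∉ s, g a = 0) :
    ‖∫ a, g a ∂μ‖ ^ 2 ≤ μ.real s * ∫ a, ‖g a‖ ^ 2 ∂μ := by
  have : IsFiniteMeasure (μ.restrict s) := isFiniteMeasure_restrict.2 hs
  calc ‖∫ a, g a ∂μ‖ ^ 2 = ‖∫ a in s, g a ∂μ‖ ^ 2 := by
        rw [setIntegral_eq_integral_of_forall_compl_eq_zero hgs]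
    _ ≤ (∫ a in s, ‖g a‖ ∂μ) ^ 2 := by gcongr; exact norm_integral_le_integral_norm _
    _ ≤ (μ.restrict s).real Set.univ * ∫ a in s, ‖g a‖ ^ 2 ∂μ :=
        sq_integral_le_measureReal_univ_mul_integral_sq (hg.norm.restrict s)
    _ = μ.real s * ∫ a, ‖g a‖ ^ 2 ∂μ := by
        rw [measureReal_restrict_apply_univ,
          setIntegral_eq_integral_of_forall_compl_eq_zero fun a ha => by simp [hgs a ha]]

namespace ContinuousLinearMap

variable {E : Type*} [NormedAddCommGroup E] [InnerProductSpace ℂ E]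

theorem isPositive_iff_forall_inner_nonneg (T : E →L[ℂ] E) :
    T.IsPositive ↔ ∀ x, 0 ≤ ⟪x, T x⟫_ℂ := by
  refine (isPositive_iff_complex T).trans (forall_congr' fun x => ?_)
  rw [← inner_conj_symm]
  generalize ⟪x, T x⟫_ℂ = z
  simp [Complex.nonneg_iff, Complex.ext_iff, and_comm, eq_comm]

theorem le_iff_forall_inner_le (A B : E →L[ℂ] E) :
    A ≤ B ↔ ∀ x, ⟪x, A x⟫_ℂ ≤ ⟪x, B x⟫_ℂ := by
  simp only [le_def, isPositive_iff_forall_inner_nonneg, sub_apply, inner_sub_right, sub_nonneg]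

variable [CompleteSpace E]

theorem inner_adjoint_comp_self_apply (T : E →L[ℂ] E) (x : E) :
    ⟪x, (adjoint T ∘L T) x⟫_ℂ = (‖T x‖ ^ 2 : ℝ) := by
  rw [comp_apply, adjoint_inner_right, inner_self_eq_norm_sq_to_K]
  norm_cast

theorem inner_integral_adjoint_comp_self_apply {α : Type*} [MeasurableSpace α] {μ : Measure α}
    {f : α → E →L[ℂ] E} (hf : Integrable (fun t => adjoint (f t) ∘L f t) μ) (x : E) :
    ⟪x, (∫ t, adjoint (f t) ∘L f t ∂μ) x⟫_ℂ = (∫ t, ‖f t x‖ ^ 2 ∂μ : ℝ) := by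
  rw [integral_apply hf, ← integral_inner (hf.apply_continuousLinearMap x)]
  simp_rw [inner_adjoint_comp_self_apply]
  exact integral_complex_ofReal

end ContinuousLinearMap

theorem integral_star_mul_integral_le_general
    {H : Type*} [NormedAddCommGroup H] [InnerProductSpace ℂ H] [CompleteSpace H]
    {G : Type*} [Group G] [TopologicalSpace G]
    [MeasurableSpace G] [BorelSpace G]
    (μ : Measure G) [μ.IsHaarMeasure]
    (f : G → H →L[ℂ] H) (hf : Continuous f) (hsupp : HasCompactSupport f) :
    adjoint (∫ t, f t ∂μ) ∘L (∫ t, f t ∂μ) ≤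
      (μ (tsupport f)).toReal • ∫ t, adjoint (f t) ∘L f t ∂μ := by
  have hf2i : Integrable (fun t => adjoint (f t) ∘L f t) μ :=
    ((adjoint.continuous.comp hf).clm_comp hf).integrable_of_hasCompactSupport
      (hsupp.comp_left (g := fun T => adjoint T ∘L T) (by simp))
  rw [le_iff_forall_inner_le]
  intro x
  have hfx : MemLp (fun t => f t x) 2 μ :=
    (hf.clm_apply continuous_const).memLp_of_hasCompactSupport
      (hsupp.comp_left (g := fun T : H →L[ℂ] H => T x) rfl)
  rw [inner_adjoint_comp_self_apply, smul_apply, ← Complex.coe_smul, inner_smul_right,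
    inner_integral_adjoint_comp_self_apply hf2i,
    integral_apply (hf.integrable_of_hasCompactSupport hsupp)]
  exact_mod_cast sq_norm_integral_le_measureReal_mul_integral_norm_sq
    hsupp.measure_lt_top.ne hfx fun t ht => by simp [image_eq_zero_of_notMem_tsupport ht]

/-- For a continuous compactly supported function `f` from a locally compact group `G` with Haar
measure `μ` into the bounded operators on a Hilbert space `H`,
`(∫ f)* (∫ f) ≤ μ(supp f) • ∫ f* f` in the Loewner order on `B(H)`. -/
theorem integral_star_mul_integral_le
    {H : Type*} [NormedAddCommGroup H] [InnerProductSpace ℂ H] [CompleteSpace H]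
    {G : Type*} [Group G] [TopologicalSpace G] [IsTopologicalGroup G] [LocallyCompactSpace G]
    [MeasurableSpace G] [BorelSpace G]
    (μ : Measure G) [μ.IsHaarMeasure]
    (f : G → H →L[ℂ] H) (hf : Continuous f) (hsupp : HasCompactSupport f) :
    adjoint (∫ t, f t ∂μ) ∘L (∫ t, f t ∂μ) ≤
      (μ (tsupport f)).toReal • ∫ t, adjoint (f t) ∘L f t ∂μ :=
  integral_star_mul_integral_le_general μ f hf hsupp
end

section
/- Let φ ∈ L²(S¹) with ‖φ‖₂ = 1, let P(ξ) = ⟨ξ, φ⟩φ be the rank-one projection onto span(φ), let U be multiplication by z on L²(S¹), and set αₙ(P) = UⁿPU⁻ⁿ. If φ ∈ L∞(S¹), then for every compact operator T on L²(S¹), the net of finite partial sums Σ_{n∈J} αₙ(P) T (over finite subsets J ⊆ ℤ, ordered by inclusion) converges in norm to M_{|φ|²} T, where M_{|φ|²} is multiplication by |φ|². -/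
open MeasureTheory AddCircle ContinuousLinearMap Filter InnerProductSpace
open scoped ENNReal

/-!
Conjugating `P` by `Uⁿ` gives `ξ ↦ ⟪φ, z⁻ⁿ ξ⟫ zⁿ φ = M_φ (⟪eₙ, M_{φ̄} ξ⟫ eₙ)`, so the partial sums
are `M_φ Q_J M_{φ̄}` with `Q_J` the orthogonal projection onto the span of `{eₙ : n ∈ J}`.
The `Q_J` have norm at most one and converge strongly to the identity, so by equicontinuity they
converge uniformly on compact sets; hence `Q_J K → K` in norm for every compact `K`, and we take
`K = M_{φ̄} T`.
-/

section UniformlyBounded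

variable {𝕜 E F G ι : Type*} [NormedAddCommGroup E] [NormedAddCommGroup F] [NormedAddCommGroup G]
  {l : Filter ι}

theorem ContinuousLinearMap.tendstoUniformlyOn_of_tendsto_of_norm_le [NontriviallyNormedField 𝕜]
    [NormedSpace 𝕜 F] [NormedSpace 𝕜 G] {S : ι → F →L[𝕜] G} {L : F →L[𝕜] G} {C : ℝ}
    (hC : ∀ i, ‖S i‖ ≤ C) (hS : ∀ x, Tendsto (fun i => S i x) l (nhds (L x)))
    {K : Set F} (hK : IsCompact K) :
    TendstoUniformlyOn (fun i => ⇑(S i)) L l K := by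
  have hequi : Equicontinuous fun i => ⇑(S i) :=
    ((NormedSpace.equicontinuous_TFAE S).out 5 1).mp (⟨C, hC⟩ : ∃ C, ∀ i, ‖S i‖ ≤ C)
  have hpi : Tendsto ((⋃₀ {K}).domRestrict ∘ fun i => ⇑(S i)) l
      (nhds ((⋃₀ {K}).domRestrict L)) :=
    tendsto_pi_nhds.mpr fun x => hS x
  have := (EquicontinuousOn.tendsto_uniformOnFun_iff_pi' (by simpa using hK)
    (fun _ _ => hequi.equicontinuousOn _) l L).mpr hpi
  exact UniformOnFun.tendsto_iff_tendstoUniformlyOn.mp this K rfl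

theorem ContinuousLinearMap.tendsto_comp_of_tendsto_of_norm_le [RCLike 𝕜] [NormedSpace 𝕜 E]
    [NormedSpace 𝕜 F] [NormedSpace 𝕜 G] {S : ι → F →L[𝕜] G} {L : F →L[𝕜] G} {C : ℝ}
    (hC : ∀ i, ‖S i‖ ≤ C) (hS : ∀ x, Tendsto (fun i => S i x) l (nhds (L x)))
    {T : E →L[𝕜] F} (hT : IsCompactOperator T) :
    Tendsto (fun i => S i ∘L T) l (nhds (L ∘L T)) := by
  have hunif := Metric.tendstoUniformlyOn_iff.mp
    (tendstoUniformlyOn_of_tendsto_of_norm_le hC hS (hT.isCompact_closure_image_closedBall 1))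
  refine Metric.tendsto_nhds.mpr fun ε hε => ?_
  filter_upwards [hunif (ε / 2) (half_pos hε)] with i hi
  rw [dist_eq_norm]
  refine (opNorm_le_of_unit_norm (half_pos hε).le fun x hx => ?_).trans_lt (half_lt_self hε)
  have := hi (T x) (subset_closure ⟨x, by simp [hx], rfl⟩)
  rw [dist_comm, dist_eq_norm] at this
  simpa using this.le

end UniformlyBounded

section Orthonormal

variable {𝕜 E ι : Type*} [RCLike 𝕜] [NormedAddCommGroup E] [InnerProductSpace 𝕜 E]

theorem Orthonormal.norm_sum_rankOne_le {v : ι → E} (hv : Orthonormal 𝕜 v) (s : Finset ι) :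
    ‖∑ i ∈ s, rankOne 𝕜 (v i) (v i)‖ ≤ 1 := by
  refine opNorm_le_bound _ zero_le_one fun x => ?_
  have hpythagoras := hv.orthogonalFamily.norm_sum (fun i => inner 𝕜 (v i) x) s
  simp only [LinearIsometry.toSpanSingleton_apply] at hpythagoras
  rw [one_mul, sum_apply]
  refine (pow_le_pow_iff_left₀ (norm_nonneg _) (norm_nonneg _) two_ne_zero).mp ?_
  simpa only [rankOne_apply, hpythagoras] using hv.sum_inner_products_le x

theorem HilbertBasis.tendsto_sum_rankOne_comp {F : Type*} [NormedAddCommGroup F]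
    [NormedSpace 𝕜 F] (b : HilbertBasis ι 𝕜 E) {T : F →L[𝕜] E} (hT : IsCompactOperator T) :
    Tendsto (fun s : Finset ι => (∑ i ∈ s, rankOne 𝕜 (b i) (b i)) ∘L T) atTop (nhds T) := by
  have hpartial (x : E) :
      Tendsto (fun s : Finset ι => (∑ i ∈ s, rankOne 𝕜 (b i) (b i)) x) atTop (nhds x) := by
    simp only [sum_apply, rankOne_apply, ← b.repr_apply_apply]
    exact b.hasSum_repr x
  simpa using tendsto_comp_of_tendsto_of_norm_le (L := ContinuousLinearMap.id 𝕜 E)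
    b.orthonormal.norm_sum_rankOne_le hpartial hT

end Orthonormal

namespace MeasureTheory.MemLp

variable {α 𝕜 : Type*} [MeasurableSpace α] {μ : Measure α} [NontriviallyNormedField 𝕜]
  {q : ℝ≥0∞} [Fact (1 ≤ q)] {g : α → 𝕜}

noncomputable def mulL (hg : MemLp g ∞ μ) : Lp 𝕜 q μ →L[𝕜] Lp 𝕜 q μ :=
  (ContinuousLinearMap.mul 𝕜 𝕜).holderL μ ∞ q q hg.toLp

theorem coeFn_mulL (hg : MemLp g ∞ μ) (ξ : Lp 𝕜 q μ) :
    (hg.mulL ξ : α → 𝕜) =ᵐ[μ] fun x => g x * ξ x := by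
  filter_upwards [(ContinuousLinearMap.mul 𝕜 𝕜).coeFn_holder (r := q) hg.toLp ξ,
    hg.coeFn_toLp] with x hx hgx
  simp [mulL, hx, hgx]

end MeasureTheory.MemLp

section Circle

variable {p : ℝ} [hp : Fact (0 < p)] {φ : Lp ℂ 2 (@haarAddCircle p hp)}
  (hφ : MemLp (φ : AddCircle p → ℂ) ∞ haarAddCircle)
  {W : ℤ → (Lp ℂ 2 (@haarAddCircle p hp) →L[ℂ] Lp ℂ 2 (@haarAddCircle p hp))}
  (hW : ∀ (n : ℤ) (ξ : Lp ℂ 2 (@haarAddCircle p hp)),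
    (W n ξ : AddCircle p → ℂ) =ᵐ[haarAddCircle] fun x => fourier n x * ξ x)
include hφ hW

theorem shift_apply_eq_mulL_fourierLp (n : ℤ) : W n φ = hφ.mulL (fourierLp 2 n) := by
  apply Lp.ext
  filter_upwards [hW n φ, hφ.coeFn_mulL (fourierLp 2 n), coeFn_fourierLp 2 n] with x h1 h2 h3
  rw [h1, h2, h3, mul_comm]

theorem inner_shift_neg_eq_inner_fourierLp_mulL_star (n : ℤ) (ξ : Lp ℂ 2 (@haarAddCircle p hp)) :
    inner ℂ φ (W (-n) ξ) = inner ℂ (fourierLp 2 n) (hφ.star.mulL ξ) := by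
  rw [L2.inner_def, L2.inner_def]
  refine integral_congr_ae ?_
  filter_upwards [hW (-n) ξ, hφ.star.coeFn_mulL ξ, coeFn_fourierLp 2 n] with x h1 h2 h3
  simp only [h1, h2, h3, fourier_neg, RCLike.inner_apply, Pi.star_apply, RCLike.star_def]
  ring

theorem shift_comp_rankOne_comp_shift_neg (n : ℤ) :
    W n ∘L rankOne ℂ φ φ ∘L W (-n)
      = hφ.mulL ∘L rankOne ℂ (fourierLp 2 n) (fourierLp 2 n) ∘L hφ.star.mulL := by
  ext1 ξ
  simp [inner_shift_neg_eq_inner_fourierLp_mulL_star hφ hW,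
    shift_apply_eq_mulL_fourierLp hφ hW]

end Circle

theorem tendsto_sum_conj_rank_one_comp_compact_general
    {p : ℝ} [hp : Fact (0 < p)]
    (φ : Lp ℂ 2 (@haarAddCircle p hp))
    (hφtop : MemLp (φ : AddCircle p → ℂ) ∞ haarAddCircle)
    (P : Lp ℂ 2 (@haarAddCircle p hp) →L[ℂ] Lp ℂ 2 (@haarAddCircle p hp))
    (hP : ∀ ξ, P ξ = (inner ℂ φ ξ : ℂ) • φ)
    (W : ℤ → (Lp ℂ 2 (@haarAddCircle p hp) →L[ℂ] Lp ℂ 2 (@haarAddCircle p hp)))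
    (hW : ∀ (n : ℤ) (ξ : Lp ℂ 2 (@haarAddCircle p hp)),
      (W n ξ : AddCircle p → ℂ) =ᵐ[haarAddCircle] fun x => fourier n x * ξ x)
    (M : Lp ℂ 2 (@haarAddCircle p hp) →L[ℂ] Lp ℂ 2 (@haarAddCircle p hp))
    (hM : ∀ ξ, (M ξ : AddCircle p → ℂ) =ᵐ[haarAddCircle]
      fun x => (starRingEnd ℂ) (φ x) * φ x * ξ x)
    (T : Lp ℂ 2 (@haarAddCircle p hp) →L[ℂ] Lp ℂ 2 (@haarAddCircle p hp))
    (hT : IsCompactOperator T) :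
    Tendsto (fun J : Finset ℤ => ∑ n ∈ J, (W n ∘L P ∘L W (-n)) ∘L T)
      atTop (nhds (M ∘L T)) := by
  have hP' : P = rankOne ℂ φ φ := ContinuousLinearMap.ext hP
  have hM' : M = hφtop.mulL ∘L hφtop.star.mulL := by
    ext1 ξ
    apply Lp.ext
    filter_upwards [hM ξ, hφtop.coeFn_mulL (hφtop.star.mulL ξ), hφtop.star.coeFn_mulL ξ]
      with x h1 h2 h3
    simp only [h1, comp_apply, h2, h3, Pi.star_apply, starRingEnd_apply]
    ring
  have hsum (J : Finset ℤ) : ∑ n ∈ J, (W n ∘L P ∘L W (-n)) ∘L T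
      = hφtop.mulL ∘L ((∑ n ∈ J, rankOne ℂ (fourierBasis n) (fourierBasis n))
        ∘L (hφtop.star.mulL ∘L T)) := by
    simp only [hP', shift_comp_rankOne_comp_shift_neg hφtop hW, coe_fourierBasis,
      ← finsetSum_comp, ← comp_finsetSum, comp_assoc]
  simp_rw [hsum, hM', comp_assoc]
  exact ((compL ℂ _ _ _ hφtop.mulL).continuous.tendsto _).comp
    (fourierBasis.tendsto_sum_rankOne_comp (hT.clm_comp hφtop.star.mulL))

/-- Let `φ` be a unit vector of `L²(S¹)` which lies in `L∞(S¹)`, `P` the rank-one projection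
onto the span of `φ`, and `W n` the operator of multiplication by `zⁿ` (so `W n = Uⁿ` with `U`
the bilateral shift, and `αₙ(P) = W n ∘ P ∘ W (-n)`).  Then for every compact operator `T`, the
net of finite partial sums `∑_{n ∈ J} αₙ(P) T` over finite subsets `J ⊆ ℤ` converges in norm to
`M T`, where `M` is multiplication by `|φ|²`. -/
theorem tendsto_sum_conj_rank_one_comp_compact
    {p : ℝ} [hp : Fact (0 < p)]
    (φ : Lp ℂ 2 (@haarAddCircle p hp)) (hφ2 : ‖φ‖ = 1)
    (hφtop : MemLp (φ : AddCircle p → ℂ) ∞ haarAddCircle)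
    (P : Lp ℂ 2 (@haarAddCircle p hp) →L[ℂ] Lp ℂ 2 (@haarAddCircle p hp))
    (hP : ∀ ξ, P ξ = (inner ℂ φ ξ : ℂ) • φ)
    (W : ℤ → (Lp ℂ 2 (@haarAddCircle p hp) →L[ℂ] Lp ℂ 2 (@haarAddCircle p hp)))
    (hW : ∀ (n : ℤ) (ξ : Lp ℂ 2 (@haarAddCircle p hp)),
      (W n ξ : AddCircle p → ℂ) =ᵐ[haarAddCircle] fun x => fourier n x * ξ x)
    (M : Lp ℂ 2 (@haarAddCircle p hp) →L[ℂ] Lp ℂ 2 (@haarAddCircle p hp))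
    (hM : ∀ ξ, (M ξ : AddCircle p → ℂ) =ᵐ[haarAddCircle]
      fun x => (starRingEnd ℂ) (φ x) * φ x * ξ x)
    (T : Lp ℂ 2 (@haarAddCircle p hp) →L[ℂ] Lp ℂ 2 (@haarAddCircle p hp))
    (hT : IsCompactOperator T) :
    Tendsto (fun J : Finset ℤ => ∑ n ∈ J, (W n ∘L P ∘L W (-n)) ∘L T)
      atTop (nhds (M ∘L T)) :=
  tendsto_sum_conj_rank_one_comp_compact_general (hp := hp) φ hφtop P hP W hW M hM T hT
end

section
/- Let f : G → A be an unconditionally integrable function from a locally compact group into a C*-algebra, and let {φ_i} ⊆ L∞(G) be a bounded net converging to φ ∈ L∞(G) uniformly on compact subsets of G. Then ∫ᵘ φ_i(t) f(t) dt → ∫ᵘ φ(t) f(t) dt in the norm of A. -/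
/-!
Write `ψ = φᵢ - φ` and let `K` be a compact neighbourhood of a compact set `K₀` outside of which
the tails of `f` are `δ`-small. Cutting `ψ` by the indicator of `interior K` splits `I ψ` in two:
the inner part is bounded by `M δ` once `‖ψ‖ ≤ δ` on `K`, which uniform convergence on `K`
eventually gives; the outer part is a limit of integrals over the compact sets `L \ interior K`,
which avoid `K₀`, so it is at most `δ ‖ψ‖_∞ ≤ 2 C δ`.
-/

open MeasureTheory Filter Topology Set

namespace MeasureTheory

variable {X : Type*} [TopologicalSpace X] [MeasurableSpace X] {μ : Measure X}
  {E : Type*} [NormedAddCommGroup E] [NormedSpace ℂ E] {f : X → E} {I : (X → ℂ) → E}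

instance atTop_isCompact_neBot : (atTop : Filter {K : Set X // IsCompact K}).NeBot :=
  atTop_neBot_iff.mpr ⟨⟨⟨∅, isCompact_empty⟩⟩,
    ⟨fun K L => ⟨⟨K.1 ∪ L.1, K.2.union L.2⟩, subset_union_left, subset_union_right⟩⟩⟩

def IsUnconditionalIntegral (μ : Measure X) (f : X → E) (I : (X → ℂ) → E) : Prop :=
  ∀ φ : X → ℂ, Measurable φ → (∃ C, ∀ t, ‖φ t‖ ≤ C) →
    Tendsto (fun K : {K : Set X // IsCompact K} => ∫ t in (K : Set X), φ t • f t ∂μ)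
      atTop (𝓝 (I φ))

namespace IsUnconditionalIntegral

theorem map_add (hI : IsUnconditionalIntegral μ f I)
    (hint : ∀ φ : X → ℂ, Measurable φ → (∃ C, ∀ t, ‖φ t‖ ≤ C) →
      ∀ K : Set X, IsCompact K → IntegrableOn (fun t => φ t • f t) K μ)
    {φ ψ : X → ℂ} (hφ : Measurable φ) (hψ : Measurable ψ)
    (hφb : ∃ C, ∀ t, ‖φ t‖ ≤ C) (hψb : ∃ C, ∀ t, ‖ψ t‖ ≤ C) :
    I (φ + ψ) = I φ + I ψ := by
  obtain ⟨C, hC⟩ := hφb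
  obtain ⟨D, hD⟩ := hψb
  have hbdd : ∃ C, ∀ t, ‖(φ + ψ) t‖ ≤ C :=
    ⟨C + D, fun t => (norm_add_le _ _).trans (add_le_add (hC t) (hD t))⟩
  refine tendsto_nhds_unique (hI _ (hφ.add hψ) hbdd)
    (((hI φ hφ ⟨C, hC⟩).add (hI ψ hψ ⟨D, hD⟩)).congr fun K => ?_)
  simp_rw [Pi.add_apply, add_smul]
  exact (integral_add (hint φ hφ ⟨C, hC⟩ K.1 K.2) (hint ψ hψ ⟨D, hD⟩ K.1 K.2)).symm

theorem map_sub (hI : IsUnconditionalIntegral μ f I)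
    (hint : ∀ φ : X → ℂ, Measurable φ → (∃ C, ∀ t, ‖φ t‖ ≤ C) →
      ∀ K : Set X, IsCompact K → IntegrableOn (fun t => φ t • f t) K μ)
    {φ ψ : X → ℂ} (hφ : Measurable φ) (hψ : Measurable ψ)
    (hφb : ∃ C, ∀ t, ‖φ t‖ ≤ C) (hψb : ∃ C, ∀ t, ‖ψ t‖ ≤ C) :
    I (φ - ψ) = I φ - I ψ := by
  obtain ⟨C, hC⟩ := hφb
  obtain ⟨D, hD⟩ := hψb
  have hsub : ∃ C, ∀ t, ‖(φ - ψ) t‖ ≤ C :=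
    ⟨C + D, fun t => (norm_sub_le _ _).trans (add_le_add (hC t) (hD t))⟩
  rw [eq_sub_iff_add_eq, ← hI.map_add hint (hφ.sub hψ) hψ hsub ⟨D, hD⟩, sub_add_cancel]

theorem norm_indicator_compl_le [OpensMeasurableSpace X] (hI : IsUnconditionalIntegral μ f I)
    {K U : Set X} {ε : ℝ}
    (htail : ∀ L : Set X, IsCompact L → Disjoint K L →
      ∀ (φ : X → ℂ) (C : ℝ), Measurable φ → (∀ t, ‖φ t‖ ≤ C) →
        ‖∫ t in L, φ t • f t ∂μ‖ ≤ ε * C)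
    (hU : IsOpen U) (hKU : K ⊆ U) {ψ : X → ℂ} {D : ℝ} (hψ : Measurable ψ)
    (hψD : ∀ t, ‖ψ t‖ ≤ D) :
    ‖I (Uᶜ.indicator ψ)‖ ≤ ε * D := by
  have hUc : MeasurableSet Uᶜ := hU.measurableSet.compl
  have hψD' : ∀ t, ‖Uᶜ.indicator ψ t‖ ≤ D :=
    fun t => (norm_indicator_le_norm_self ψ t).trans (hψD t)
  refine le_of_tendsto (hI _ (hψ.indicator hUc) ⟨D, hψD'⟩).norm (Eventually.of_forall fun L => ?_)
  rw [← indicator_smul_left, setIntegral_indicator hUc]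
  exact htail _ (L.2.inter_right hU.isClosed_compl)
    (disjoint_compl_right.mono_left hKU |>.mono_right inter_subset_right) ψ D hψ hψD

theorem exists_isCompact_norm_le [WeaklyLocallyCompactSpace X] [OpensMeasurableSpace X]
    (hI : IsUnconditionalIntegral μ f I)
    (hint : ∀ φ : X → ℂ, Measurable φ → (∃ C, ∀ t, ‖φ t‖ ≤ C) →
      ∀ K : Set X, IsCompact K → IntegrableOn (fun t => φ t • f t) K μ)
    {M : ℝ} (hM : ∀ (φ : X → ℂ) (C : ℝ), Measurable φ → (∀ t, ‖φ t‖ ≤ C) → ‖I φ‖ ≤ M * C)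
    (htail : ∀ ε : ℝ, 0 < ε → ∃ K : Set X, IsCompact K ∧
      ∀ L : Set X, IsCompact L → Disjoint K L →
        ∀ (φ : X → ℂ) (C : ℝ), Measurable φ → (∀ t, ‖φ t‖ ≤ C) →
          ‖∫ t in L, φ t • f t ∂μ‖ ≤ ε * C)
    {ε : ℝ} (hε : 0 < ε) :
    ∃ K : Set X, IsCompact K ∧ ∀ (ψ : X → ℂ) (D : ℝ), Measurable ψ → (∀ t, ‖ψ t‖ ≤ D) →
      (∀ t ∈ K, ‖ψ t‖ ≤ ε) → ‖I ψ‖ ≤ M * ε + ε * D := by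
  obtain ⟨K₀, hK₀, htail₀⟩ := htail ε hε
  obtain ⟨K, hK, hK₀K⟩ := exists_compact_superset hK₀
  refine ⟨K, hK, fun ψ D hψ hψD hψε => ?_⟩
  have hU : MeasurableSet (interior K) := isOpen_interior.measurableSet
  have hψD' : ∀ s : Set X, ∀ t, ‖s.indicator ψ t‖ ≤ D :=
    fun s t => (norm_indicator_le_norm_self ψ t).trans (hψD t)
  have hsplit : I ψ = I ((interior K).indicator ψ) + I ((interior K)ᶜ.indicator ψ) := by
    rw [← hI.map_add hint (hψ.indicator hU) (hψ.indicator hU.compl) ⟨D, hψD' _⟩ ⟨D, hψD' _⟩,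
      indicator_self_add_compl]
  have hinner : ‖I ((interior K).indicator ψ)‖ ≤ M * ε := by
    refine hM _ _ (hψ.indicator hU) fun t => ?_
    by_cases ht : t ∈ interior K
    · simpa [ht] using hψε t (interior_subset ht)
    · simpa [ht] using hε.le
  rw [hsplit]
  exact (norm_add_le _ _).trans
    (add_le_add hinner (hI.norm_indicator_compl_le htail₀ isOpen_interior hK₀K hψ hψD))

end IsUnconditionalIntegral
end MeasureTheory

theorem tendsto_unconditional_integral_of_tendstoUniformlyOn_general
    {G : Type*} [TopologicalSpace G] [LocallyCompactSpace G]
    [MeasurableSpace G] [BorelSpace G]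
    (μ : Measure G)
    {A : Type*} [NonUnitalNormedRing A]
    [NormedSpace ℂ A]
    (f : G → A)
    (hint : ∀ (φ : G → ℂ), Measurable φ → (∃ C, ∀ t, ‖φ t‖ ≤ C) →
      ∀ K : Set G, IsCompact K → IntegrableOn (fun t => φ t • f t) K μ)
    (I : (G → ℂ) → A)
    (hI : ∀ (φ : G → ℂ), Measurable φ → (∃ C, ∀ t, ‖φ t‖ ≤ C) →
      Tendsto (fun K : {K : Set G // IsCompact K} => ∫ t in (K : Set G), φ t • f t ∂μ)
        atTop (nhds (I φ)))
    (M : ℝ)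
    (hM : ∀ (φ : G → ℂ) (C : ℝ), Measurable φ → (∀ t, ‖φ t‖ ≤ C) → ‖I φ‖ ≤ M * C)
    (htail : ∀ ε : ℝ, 0 < ε → ∃ K : Set G, IsCompact K ∧
      ∀ L : Set G, IsCompact L → Disjoint K L →
        ∀ (φ : G → ℂ) (C : ℝ), Measurable φ → (∀ t, ‖φ t‖ ≤ C) →
          ‖∫ t in L, φ t • f t ∂μ‖ ≤ ε * C)
    {ι : Type*} (l : Filter ι)
    (φnet : ι → G → ℂ) (φlim : G → ℂ)
    (hmeas : ∀ i, Measurable (φnet i)) (hmeaslim : Measurable φlim)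
    (C : ℝ) (hbdd : ∀ i t, ‖φnet i t‖ ≤ C) (hbddlim : ∀ t, ‖φlim t‖ ≤ C)
    (hunif : ∀ K : Set G, IsCompact K → TendstoUniformlyOn φnet φlim l K) :
    Tendsto (fun i => I (φnet i)) l (nhds (I φlim)) := by
  have hIu : IsUnconditionalIntegral μ f I := hI
  rw [Metric.tendsto_nhds]
  intro ε hε
  obtain ⟨δ, hδ, hδε⟩ := exists_pos_mul_lt hε (M + 2 * C)
  obtain ⟨K, hK, hsmall⟩ := hIu.exists_isCompact_norm_le hint hM htail hδ
  filter_upwards [Metric.tendstoUniformlyOn_iff.mp (hunif K hK) δ hδ] with i hi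
  have hdiff : ∀ t, ‖(φnet i - φlim) t‖ ≤ 2 * C := fun t =>
    (norm_sub_le _ _).trans (by linarith [hbdd i t, hbddlim t])
  rw [dist_eq_norm, ← hIu.map_sub hint (hmeas i) hmeaslim ⟨C, hbdd i⟩ ⟨C, hbddlim⟩]
  calc ‖I (φnet i - φlim)‖ ≤ M * δ + δ * (2 * C) :=
        hsmall _ _ ((hmeas i).sub hmeaslim) hdiff fun t ht => by
          simpa [dist_eq_norm, norm_sub_rev] using (hi t ht).le
    _ < ε := by linarith

/-- Let `f : G → A` be an unconditionally integrable function from a locally compact group into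
a C*-algebra (so each bounded measurable `φ` has an unconditional integral `I φ = ∫ᵘ φ f`,
realized as the limit of the net of Bochner integrals over compact sets, with a uniform bound
`‖I φ‖ ≤ M ‖φ‖_∞` and uniformly small tails outside compact sets).  If `{φᵢ}` is a bounded net
in `L∞(G)` converging to `φ` uniformly on compact subsets of `G`, then `I (φᵢ) → I φ` in the
norm of `A`. -/
theorem tendsto_unconditional_integral_of_tendstoUniformlyOn
    {G : Type*} [Group G] [TopologicalSpace G] [IsTopologicalGroup G] [LocallyCompactSpace G]
    [MeasurableSpace G] [BorelSpace G]
    (μ : Measure G) [μ.IsHaarMeasure]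
    {A : Type*} [NonUnitalNormedRing A] [StarRing A] [CStarRing A]
    [NormedSpace ℂ A] [IsScalarTower ℂ A A] [SMulCommClass ℂ A A] [CompleteSpace A]
    (f : G → A)
    (hint : ∀ (φ : G → ℂ), Measurable φ → (∃ C, ∀ t, ‖φ t‖ ≤ C) →
      ∀ K : Set G, IsCompact K → IntegrableOn (fun t => φ t • f t) K μ)
    (I : (G → ℂ) → A)
    (hI : ∀ (φ : G → ℂ), Measurable φ → (∃ C, ∀ t, ‖φ t‖ ≤ C) →
      Tendsto (fun K : {K : Set G // IsCompact K} => ∫ t in (K : Set G), φ t • f t ∂μ)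
        atTop (nhds (I φ)))
    (M : ℝ)
    (hM : ∀ (φ : G → ℂ) (C : ℝ), Measurable φ → (∀ t, ‖φ t‖ ≤ C) → ‖I φ‖ ≤ M * C)
    (htail : ∀ ε : ℝ, 0 < ε → ∃ K : Set G, IsCompact K ∧
      ∀ L : Set G, IsCompact L → Disjoint K L →
        ∀ (φ : G → ℂ) (C : ℝ), Measurable φ → (∀ t, ‖φ t‖ ≤ C) →
          ‖∫ t in L, φ t • f t ∂μ‖ ≤ ε * C)
    {ι : Type*} (l : Filter ι) [l.NeBot]
    (φnet : ι → G → ℂ) (φlim : G → ℂ)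
    (hmeas : ∀ i, Measurable (φnet i)) (hmeaslim : Measurable φlim)
    (C : ℝ) (hbdd : ∀ i t, ‖φnet i t‖ ≤ C) (hbddlim : ∀ t, ‖φlim t‖ ≤ C)
    (hunif : ∀ K : Set G, IsCompact K → TendstoUniformlyOn φnet φlim l K) :
    Tendsto (fun i => I (φnet i)) l (nhds (I φlim)) :=
  tendsto_unconditional_integral_of_tendstoUniformlyOn_general μ f hint I hI M hM htail l φnet φlim
    hmeas hmeaslim C hbdd hbddlim hunif
end

section
/- Let P be the rank-one projection onto the span of a unit vector φ ∈ L²(S¹). If the bilateral-shift orbit sums converge, i.e., if the strictly-unconditional sum T = Σ_{n∈ℤ} UⁿPU⁻ⁿ exists as a bounded operator on L²(S¹) (U being multiplication by z), then the matrix of T in the basis {eₙ} satisfies ⟨T e_j, e_i⟩ = (φ · conj(φ))^(i−j), the (i−j)-th Fourier coefficient of |φ|², and consequently φ ∈ L∞(S¹). -/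
/-!
Since `W n` is unitary with inverse `W (-n)`, the `n`-th term `⟪η, W n P W (-n) ξ⟫` of the
series is `⟪η, W n φ⟫ ⟪W n φ, ξ⟫`. For basis vectors, reindexing turns the series for
`⟪e_i, S e_j⟫` into Parseval's identity for the pair `φ, W (j - i) φ`, whose inner product is the
`(i - j)`-th Fourier coefficient of `|φ|²`. For the indicator `ψ = 1_s` of a measurable set,
`⟪W n φ, ψ⟫` is the `n`-th Fourier coefficient of `1_s · conj φ`, so Parseval gives
`∫_s |φ|² = re ⟪ψ, S ψ⟫ ≤ ‖S‖ |s|`; since `s` is arbitrary, `|φ|² ≤ ‖S‖` almost everywhere.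
-/

open MeasureTheory AddCircle ContinuousLinearMap Filter
open scoped ENNReal InnerProductSpace ComplexConjugate

section RankOneShiftConj

variable {𝕜 E : Type*} [RCLike 𝕜] [NormedAddCommGroup E] [InnerProductSpace 𝕜 E]
  {φ : E} {P : E →L[𝕜] E} {W : ℤ → E →L[𝕜] E}

theorem inner_shift_conj_rankOne (hP : ∀ ξ, P ξ = ⟪φ, ξ⟫_𝕜 • φ)
    (hW : ∀ n ξ η, ⟪η, W n ξ⟫_𝕜 = ⟪W (-n) η, ξ⟫_𝕜) (n : ℤ) (ξ η : E) :
    ⟪η, (W n ∘L P ∘L W (-n)) ξ⟫_𝕜 = ⟪W n φ, ξ⟫_𝕜 * ⟪η, W n φ⟫_𝕜 := by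
  rw [comp_apply, comp_apply, hP, map_smul, inner_smul_right, hW (-n), neg_neg]

theorem hasSum_norm_sq_inner_shift_conj_rankOne (hP : ∀ ξ, P ξ = ⟪φ, ξ⟫_𝕜 • φ)
    (hW : ∀ n ξ η, ⟪η, W n ξ⟫_𝕜 = ⟪W (-n) η, ξ⟫_𝕜) {ψ : E} {a : 𝕜}
    (hS : HasSum (fun n => ⟪ψ, (W n ∘L P ∘L W (-n)) ψ⟫_𝕜) a) :
    HasSum (fun n => ‖⟪W n φ, ψ⟫_𝕜‖ ^ 2) (RCLike.re a) := by
  have hterm : ∀ n, ⟪ψ, (W n ∘L P ∘L W (-n)) ψ⟫_𝕜 = ((‖⟪W n φ, ψ⟫_𝕜‖ ^ 2 : ℝ) : 𝕜) := by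
    intro n
    rw [inner_shift_conj_rankOne hP hW, ← inner_conj_symm ψ, RCLike.mul_conj, RCLike.ofReal_pow]
  simp_rw [hterm] at hS
  simpa using RCLike.reCLM.hasSum hS

theorem hasSum_inner_basis_shift_conj_rankOne (hP : ∀ ξ, P ξ = ⟪φ, ξ⟫_𝕜 • φ)
    (hW : ∀ n ξ η, ⟪η, W n ξ⟫_𝕜 = ⟪W (-n) η, ξ⟫_𝕜) (b : HilbertBasis ℤ 𝕜 E)
    (hWb : ∀ n k, W n (b k) = b (n + k)) (i j : ℤ) :
    HasSum (fun n => ⟪b i, (W n ∘L P ∘L W (-n)) (b j)⟫_𝕜) ⟪W (i - j) φ, φ⟫_𝕜 := by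
  have hterm : ∀ n, ⟪b i, (W n ∘L P ∘L W (-n)) (b j)⟫_𝕜
      = ⟪φ, b (j - n)⟫_𝕜 * ⟪b (j - n), W (j - i) φ⟫_𝕜 := by
    intro n
    have hleft : ⟪W n φ, b j⟫_𝕜 = ⟪φ, b (j - n)⟫_𝕜 := by
      rw [← neg_neg n, ← hW, hWb, neg_neg, neg_add_eq_sub]
    have hright : ⟪b i, W n φ⟫_𝕜 = ⟪b (j - n), W (j - i) φ⟫_𝕜 := by
      rw [hW, hW, hWb, hWb]
      congr 2
      ring
    rw [inner_shift_conj_rankOne hP hW, hleft, hright]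
  have hsum := (Equiv.subLeft j).hasSum_iff.mpr (b.hasSum_inner_mul_inner φ (W (j - i) φ))
  rw [hW, neg_sub] at hsum
  exact hsum.congr_fun fun n => hterm n

end RankOneShiftConj

theorem memLp_top_of_setIntegral_norm_sq_le {α F : Type*} [MeasurableSpace α] {μ : Measure α}
    [IsFiniteMeasure μ] [NormedAddCommGroup F] {f : α → F} (hf : MemLp f 2 μ) {C : ℝ}
    (h : ∀ s, MeasurableSet s → ∫ x in s, ‖f x‖ ^ 2 ∂μ ≤ C * μ.real s) :
    MemLp f ∞ μ := by
  have hsq : ∀ᵐ x ∂μ, ‖f x‖ ^ 2 ≤ C :=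
    ae_le_of_forall_setIntegral_le (hf.integrable_norm_pow two_ne_zero) (integrable_const C)
      fun s hs _ => by simpa [setIntegral_const, mul_comm] using h s hs
  refine memLp_top_of_bound hf.aestronglyMeasurable (Real.sqrt C) ?_
  filter_upwards [hsq] with x hx
  simpa using Real.le_sqrt_of_sq_le hx

section Circle

variable {T : ℝ} [hT : Fact (0 < T)]

theorem hasSum_sq_fourierCoeff_of_memLp {g : AddCircle T → ℂ} (hg : MemLp g 2 haarAddCircle) :
    HasSum (fun n => ‖fourierCoeff g n‖ ^ 2) (∫ t, ‖g t‖ ^ 2 ∂haarAddCircle) := by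
  have h := hasSum_sq_fourierCoeff (hg.toLp g)
  simp only [fourierCoeff_congr_ae hg.coeFn_toLp] at h
  rwa [integral_congr_ae (g := fun t => ‖g t‖ ^ 2)
    (hg.coeFn_toLp.mono fun x hx => by simp only [hx])] at h

def IsMulFourier (W : ℤ → Lp ℂ 2 (@haarAddCircle T hT) →L[ℂ] Lp ℂ 2 (@haarAddCircle T hT)) :
    Prop :=
  ∀ n ξ, (W n ξ : AddCircle T → ℂ) =ᵐ[haarAddCircle] fun x => fourier n x * ξ x

variable {W : ℤ → Lp ℂ 2 (@haarAddCircle T hT) →L[ℂ] Lp ℂ 2 (@haarAddCircle T hT)}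

namespace IsMulFourier

theorem inner_apply_eq_inner_neg_apply (hW : IsMulFourier W) (n : ℤ)
    (ξ η : Lp ℂ 2 (@haarAddCircle T hT)) :
    ⟪η, W n ξ⟫_ℂ = ⟪W (-n) η, ξ⟫_ℂ := by
  rw [L2.inner_def, L2.inner_def]
  refine integral_congr_ae ?_
  filter_upwards [hW n ξ, hW (-n) η] with x hξ hη
  simp only [RCLike.inner_apply, hξ, hη, map_mul, fourier_neg, Complex.conj_conj]
  ring

theorem apply_fourierLp (hW : IsMulFourier W) (n k : ℤ) :
    W n (fourierLp 2 k) = fourierLp 2 (n + k) := by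
  apply Lp.ext
  filter_upwards [hW n (fourierLp 2 k), coeFn_fourierLp (T := T) 2 k,
    coeFn_fourierLp (T := T) 2 (n + k)] with x hWx hk hnk
  rw [hWx, hk, hnk, fourier_add]

theorem inner_apply_eq_fourierCoeff (hW : IsMulFourier W) (n : ℤ)
    (φ ψ : Lp ℂ 2 (@haarAddCircle T hT)) :
    ⟪W n φ, ψ⟫_ℂ = fourierCoeff (fun x => conj (φ x) * ψ x) n := by
  rw [L2.inner_def, fourierCoeff]
  refine integral_congr_ae ?_
  filter_upwards [hW n φ] with x hφ
  simp only [RCLike.inner_apply, hφ, map_mul, smul_eq_mul, fourier_neg]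
  ring

end IsMulFourier

theorem setIntegral_norm_sq_le {φ : Lp ℂ 2 (@haarAddCircle T hT)}
    {P S : Lp ℂ 2 (@haarAddCircle T hT) →L[ℂ] Lp ℂ 2 (@haarAddCircle T hT)}
    (hP : ∀ ξ, P ξ = ⟪φ, ξ⟫_ℂ • φ) (hW : IsMulFourier W)
    (hS : ∀ ξ η, HasSum (fun n => ⟪η, (W n ∘L P ∘L W (-n)) ξ⟫_ℂ) ⟪η, S ξ⟫_ℂ)
    {s : Set (AddCircle T)} (hs : MeasurableSet s) :
    ∫ x in s, ‖φ x‖ ^ 2 ∂haarAddCircle ≤ ‖S‖ * haarAddCircle.real s := by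
  have hμs : haarAddCircle s ≠ ∞ := measure_ne_top _ s
  set ψ := indicatorConstLp 2 hs hμs (1 : ℂ)
  set g := s.indicator fun x => conj (φ x)
  have hg : MemLp g 2 haarAddCircle := (Lp.memLp φ).star.indicator hs
  have hcoeff : ∀ n, ⟪W n φ, ψ⟫_ℂ = fourierCoeff g n := by
    intro n
    rw [hW.inner_apply_eq_fourierCoeff]
    refine congrFun (fourierCoeff_congr_ae ?_) n
    filter_upwards [indicatorConstLp_coeFn (p := 2) (hs := hs) (hμs := hμs) (c := (1 : ℂ))]
      with x hx
    by_cases hxs : x ∈ s <;> simp [ψ, hx, g, hxs]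
  have hdiag :=
    hasSum_norm_sq_inner_shift_conj_rankOne hP hW.inner_apply_eq_inner_neg_apply (hS ψ ψ)
  simp only [hcoeff] at hdiag
  have hre : RCLike.re ⟪ψ, S ψ⟫_ℂ = ∫ x in s, ‖φ x‖ ^ 2 ∂haarAddCircle := by
    rw [hdiag.unique (hasSum_sq_fourierCoeff_of_memLp hg), ← integral_indicator hs]
    congr 1 with x
    by_cases hxs : x ∈ s <;> simp [g, hxs]
  have hψ : ‖ψ‖ ^ 2 = haarAddCircle.real s := by
    rw [norm_indicatorConstLp two_ne_zero ENNReal.ofNat_ne_top, norm_one, one_mul,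
      ← Real.rpow_natCast, ← Real.rpow_mul measureReal_nonneg]
    norm_num
  calc ∫ x in s, ‖φ x‖ ^ 2 ∂haarAddCircle = RCLike.re ⟪ψ, S ψ⟫_ℂ := hre.symm
    _ ≤ ‖ψ‖ * ‖S ψ‖ := re_inner_le_norm _ _
    _ ≤ ‖ψ‖ * (‖S‖ * ‖ψ‖) := by gcongr; exact S.le_opNorm ψ
    _ = ‖S‖ * haarAddCircle.real s := by rw [← hψ]; ring

end Circle

theorem wot_sum_shift_conj_rank_one_general
    {p : ℝ} [hp : Fact (0 < p)]
    (φ : Lp ℂ 2 (@haarAddCircle p hp))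
    (P : Lp ℂ 2 (@haarAddCircle p hp) →L[ℂ] Lp ℂ 2 (@haarAddCircle p hp))
    (hP : ∀ ξ, P ξ = (inner ℂ φ ξ : ℂ) • φ)
    (W : ℤ → (Lp ℂ 2 (@haarAddCircle p hp) →L[ℂ] Lp ℂ 2 (@haarAddCircle p hp)))
    (hW : ∀ (n : ℤ) (ξ : Lp ℂ 2 (@haarAddCircle p hp)),
      (W n ξ : AddCircle p → ℂ) =ᵐ[haarAddCircle] fun x => fourier n x * ξ x)
    (S : Lp ℂ 2 (@haarAddCircle p hp) →L[ℂ] Lp ℂ 2 (@haarAddCircle p hp))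
    (hS : ∀ ξ η : Lp ℂ 2 (@haarAddCircle p hp),
      Tendsto (fun J : Finset ℤ => ∑ n ∈ J, (inner ℂ η ((W n ∘L P ∘L W (-n)) ξ) : ℂ))
        atTop (nhds (inner ℂ η (S ξ)))) :
    (∀ i j : ℤ, (inner ℂ (fourierLp 2 i) (S (fourierLp 2 j)) : ℂ) =
        fourierCoeff (fun x : AddCircle p => (starRingEnd ℂ) (φ x) * φ x) (i - j)) ∧
      MemLp (φ : AddCircle p → ℂ) ∞ haarAddCircle := by
  have hW : IsMulFourier W := hW
  refine ⟨fun i j => ?_, memLp_top_of_setIntegral_norm_sq_le (Lp.memLp φ)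
    fun s hs => setIntegral_norm_sq_le hP hW hS hs⟩
  have hWb : ∀ n k, W n (fourierBasis k) = fourierBasis (n + k) := by
    simpa only [coe_fourierBasis] using hW.apply_fourierLp
  have hentry := hasSum_inner_basis_shift_conj_rankOne hP hW.inner_apply_eq_inner_neg_apply
    fourierBasis hWb i j
  rw [coe_fourierBasis, hW.inner_apply_eq_fourierCoeff] at hentry
  exact tendsto_nhds_unique (hS _ _) hentry

/-- Let `P` be the rank-one projection onto the span of a unit vector `φ ∈ L²(S¹)` and let
`W n` be multiplication by `zⁿ` (so `W n = Uⁿ`, `U` the bilateral shift).  If the net of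
partial sums `∑_{n ∈ J} Uⁿ P U⁻ⁿ` converges in the weak operator topology to a bounded
operator `S`, then `⟨S e_j, e_i⟩` is the `(i−j)`-th Fourier coefficient of `|φ|²`, and
consequently `φ ∈ L∞(S¹)`. -/
theorem wot_sum_shift_conj_rank_one
    {p : ℝ} [hp : Fact (0 < p)]
    (φ : Lp ℂ 2 (@haarAddCircle p hp)) (hφ2 : ‖φ‖ = 1)
    (P : Lp ℂ 2 (@haarAddCircle p hp) →L[ℂ] Lp ℂ 2 (@haarAddCircle p hp))
    (hP : ∀ ξ, P ξ = (inner ℂ φ ξ : ℂ) • φ)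
    (W : ℤ → (Lp ℂ 2 (@haarAddCircle p hp) →L[ℂ] Lp ℂ 2 (@haarAddCircle p hp)))
    (hW : ∀ (n : ℤ) (ξ : Lp ℂ 2 (@haarAddCircle p hp)),
      (W n ξ : AddCircle p → ℂ) =ᵐ[haarAddCircle] fun x => fourier n x * ξ x)
    (S : Lp ℂ 2 (@haarAddCircle p hp) →L[ℂ] Lp ℂ 2 (@haarAddCircle p hp))
    (hS : ∀ ξ η : Lp ℂ 2 (@haarAddCircle p hp),
      Tendsto (fun J : Finset ℤ => ∑ n ∈ J, (inner ℂ η ((W n ∘L P ∘L W (-n)) ξ) : ℂ))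
        atTop (nhds (inner ℂ η (S ξ)))) :
    (∀ i j : ℤ, (inner ℂ (fourierLp 2 i) (S (fourierLp 2 j)) : ℂ) =
        fourierCoeff (fun x : AddCircle p => (starRingEnd ℂ) (φ x) * φ x) (i - j)) ∧
      MemLp (φ : AddCircle p → ℂ) ∞ haarAddCircle :=
  wot_sum_shift_conj_rank_one_general (hp := hp) φ P hP W hW S hS
end
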